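/- arXiv:1406.6748 — 4 statements merged into one kernel-verified Lean document; each statement's English description precedes it below -/
import Mathlib

section
/- Let q be a prime power and let C ⊆ F_q^n be a k-dimensional linear code that is projective (the n coordinate functionals c ↦ c_i on C are all nonzero and pairwise linearly independent) and is a two-weight code with weights w_1 and w_2 (every nonzero codeword has Hamming weight w_1 or w_2). Then the n coordinate functionals, regarded as points of the projectivization of the dual space C*, are n distinct points forming a two-intersection set with parameters (n, k, n − w_1, n − w_2) that spans C*: for every nonzero codeword c ∈ C, the hyperplane {ψ ∈ C* : ψ(c) = 0} contains exactly n − w_1 or exactly n − w_2 of these points, and every hyperplane of C* arises in this way. -/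
open Function

theorem Projectivization.mk_injective_of_pairwise_linearIndependent
    {K V ι : Type*} [DivisionRing K] [AddCommGroup V] [Module K V]
    (v : ι → V) (hv : ∀ i, v i ≠ 0)
    (hpair : Pairwise fun i j => LinearIndependent K ![v i, v j]) :
    Injective fun i => Projectivization.mk K (v i) (hv i) := by
  intro i j hij
  by_contra hne
  have hindep := (independent_mk_iff_LinearIndependent (hv i) (hv j)).mpr (hpair hne)
  exact (independent_pair_iff_ne _ _).mp hindep hij

theorem card_filter_eq_zero_eq_card_sub_hammingNorm
    {ι : Type*} {β : ι → Type*} [Fintype ι] [∀ i, Zero (β i)] [∀ i, DecidableEq (β i)]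
    (x : ∀ i, β i) :
    (Finset.univ.filter fun i => x i = 0).card = Fintype.card ι - hammingNorm x := by
  rw [hammingNorm, ← Finset.card_univ, ← Finset.card_filter_add_card_filter_not
    (s := Finset.univ) (fun i => x i = 0)]
  simp only [ne_eq, Nat.add_sub_cancel]

open scoped Classical in
theorem two_weight_code_gives_two_intersection_set_general
    (F : Type*) [Field F] (n w₁ w₂ : ℕ)
    (C : Submodule F (Fin n → F))
    (φ : Fin n → (↥C →ₗ[F] F)) (hφ : ∀ i (c : C), φ i c = (c : Fin n → F) i)
    (hnz : ∀ i, φ i ≠ 0)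
    (hpair : ∀ i j, i ≠ j → LinearIndependent F ![φ i, φ j])
    (hw : ∀ c : C, c ≠ 0 →
      hammingNorm (c : Fin n → F) = w₁ ∨ hammingNorm (c : Fin n → F) = w₂) :
    Function.Injective (fun i => Projectivization.mk F (φ i) (hnz i)) ∧
    Submodule.span F (Set.range φ) = ⊤ ∧
    (∀ c : C, c ≠ 0 →
      (Finset.univ.filter fun i => φ i c = 0).card = n - w₁ ∨
      (Finset.univ.filter fun i => φ i c = 0).card = n - w₂) ∧
    (∀ Ψ : Module.Dual F (Module.Dual F ↥C), Ψ ≠ 0 →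
      ∃ c : C, c ≠ 0 ∧ LinearMap.ker Ψ = LinearMap.ker (Module.Dual.eval F ↥C c)) := by
  refine ⟨Projectivization.mk_injective_of_pairwise_linearIndependent φ hnz hpair, ?_, ?_, ?_⟩
  · refine Submodule.span_eq_top_of_ne_zero fun c hc => ?_
    obtain ⟨i, hi⟩ := Function.ne_iff.mp (Subtype.coe_ne_coe.mpr hc)
    exact ⟨φ i, ⟨i, rfl⟩, by rwa [hφ]⟩
  · intro c hc
    have hzeros : (Finset.univ.filter fun i => φ i c = 0).card
        = n - hammingNorm (c : Fin n → F) := by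
      simpa only [hφ, Fintype.card_fin] using
        card_filter_eq_zero_eq_card_sub_hammingNorm (c : Fin n → F)
    rw [hzeros]
    rcases hw c hc with h | h <;> simp [h]
  · intro Ψ hΨ
    obtain ⟨c, rfl⟩ := (Module.bijective_dual_eval F ↥C).surjective Ψ
    exact ⟨c, by rintro rfl; exact hΨ (map_zero _), rfl⟩

open scoped Classical in
theorem two_weight_code_gives_two_intersection_set
    (F : Type*) [Field F] [Fintype F] (n k w₁ w₂ : ℕ)
    (C : Submodule F (Fin n → F)) (hk : Module.finrank F C = k)
    (φ : Fin n → (↥C →ₗ[F] F)) (hφ : ∀ i (c : C), φ i c = (c : Fin n → F) i)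
    (hnz : ∀ i, φ i ≠ 0)
    (hpair : ∀ i j, i ≠ j → LinearIndependent F ![φ i, φ j])
    (hw : ∀ c : C, c ≠ 0 →
      hammingNorm (c : Fin n → F) = w₁ ∨ hammingNorm (c : Fin n → F) = w₂) :
    Function.Injective (fun i => Projectivization.mk F (φ i) (hnz i)) ∧
    Submodule.span F (Set.range φ) = ⊤ ∧
    (∀ c : C, c ≠ 0 →
      (Finset.univ.filter fun i => φ i c = 0).card = n - w₁ ∨
      (Finset.univ.filter fun i => φ i c = 0).card = n - w₂) ∧
    (∀ Ψ : Module.Dual F (Module.Dual F ↥C), Ψ ≠ 0 →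
      ∃ c : C, c ≠ 0 ∧ LinearMap.ker Ψ = LinearMap.ker (Module.Dual.eval F ↥C c)) :=
  two_weight_code_gives_two_intersection_set_general F n w₁ w₂ C φ hφ hnz hpair hw
end

section
/- Let q be a prime power with q not congruent to 2 modulo 3, let F be a finite field with q^6 elements, and let E_2 and E_3 be the subfields of F with q^2 and q^3 elements respectively. Set N = (q^2 − q + 1)(q − 1). If x, x' are nonzero elements of E_2 and y, y' are nonzero elements of E_3 with (xy)^N = (x'y')^N, then there exists a nonzero element λ of the subfield of F with q elements such that x'y' = λ·(xy). -/
/-!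
Put `λ = (x'/x)(y'/y)`. The hypothesis says `λ ^ N = 1`, while `x'/x ∈ E₂ˣ` and `y'/y ∈ E₃ˣ`
give `λ ^ ((q² - 1)(q³ - 1)) = 1`. Since `N = (q² - q + 1)(q - 1)` and `q² - q + 1` is coprime to
`(q² - 1)(q³ - 1) = (q - 1)²(q + 1)(q² + q + 1)`, this forces `λ ^ (q - 1) = 1`, i.e. `λ ∈ 𝔽_q`.
Coprimality with `q + 1` is where `q ≢ 2 (mod 3)` enters: `q² - q + 1 ≡ 3 (mod q + 1)`.
-/

namespace Int

variable (n : ℤ)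

theorem isCoprime_sq_sub_add_one_self : IsCoprime (n ^ 2 - n + 1) n :=
  ⟨1, 1 - n, by ring⟩

theorem isCoprime_sq_sub_add_one_sub_one : IsCoprime (n ^ 2 - n + 1) (n - 1) :=
  ⟨1, -n, by ring⟩

theorem isCoprime_sq_sub_add_one_two : IsCoprime (n ^ 2 - n + 1) 2 := by
  obtain ⟨k, hk⟩ := even_mul_pred_self n
  exact ⟨1, -k, by linear_combination hk⟩

theorem isCoprime_sq_sub_add_one_add_one (hn : ¬ 3 ∣ n + 1) :
    IsCoprime (n ^ 2 - n + 1) (n + 1) := by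
  have h3 : IsCoprime 3 (n + 1) := (Prime.coprime_iff_not_dvd prime_three).mpr hn
  rw [show n ^ 2 - n + 1 = 3 + (n + 1) * (n - 2) by ring]
  exact h3.add_mul_left_left _

theorem isCoprime_sq_sub_add_one_sq_add_add_one :
    IsCoprime (n ^ 2 - n + 1) (n ^ 2 + n + 1) := by
  have h2n := (isCoprime_sq_sub_add_one_two n).mul_right (isCoprime_sq_sub_add_one_self n)
  rw [show n ^ 2 + n + 1 = 2 * n + (n ^ 2 - n + 1) * 1 by ring]
  exact h2n.add_mul_left_right 1

theorem isCoprime_sq_sub_add_one_mul (hn : ¬ 3 ∣ n + 1) :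
    IsCoprime (n ^ 2 - n + 1) ((n ^ 2 - 1) * (n ^ 3 - 1)) := by
  have hsub := isCoprime_sq_sub_add_one_sub_one n
  have h := ((hsub.mul_right (isCoprime_sq_sub_add_one_add_one n hn)).mul_right hsub).mul_right
    (isCoprime_sq_sub_add_one_sq_add_add_one n)
  rwa [show (n ^ 2 - 1) * (n ^ 3 - 1) = (n - 1) * (n + 1) * (n - 1) * (n ^ 2 + n + 1) by ring]

end Int

theorem Nat.coprime_sq_sub_add_one_mul {q : ℕ} (hq : q % 3 ≠ 2) :
    Nat.Coprime (q ^ 2 - q + 1) ((q ^ 2 - 1) * (q ^ 3 - 1)) := by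
  rcases q.eq_zero_or_pos with rfl | hq0
  · simp
  have h := Int.isCoprime_sq_sub_add_one_mul q (by omega)
  rw [← Nat.isCoprime_iff_coprime]
  have h1 : 1 ≤ q ^ 2 := Nat.one_le_pow _ _ hq0
  have h2 : 1 ≤ q ^ 3 := Nat.one_le_pow _ _ hq0
  have h3 : q ≤ q ^ 2 := Nat.le_self_pow two_ne_zero q
  push_cast [h1, h2, h3]
  exact h

theorem pow_eq_one_of_pow_mul_eq_one_of_coprime {M : Type*} [Monoid M] {x : M} {a b m : ℕ}
    (hab : a.Coprime b) (ha : x ^ (a * m) = 1) (hb : x ^ b = 1) : x ^ m = 1 := by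
  have hbm : x ^ (b * m) = 1 := by rw [pow_mul, hb, one_pow]
  simpa [Nat.gcd_mul_right, hab] using pow_gcd_eq_one.mpr ⟨ha, hbm⟩

theorem Subfield.pow_card_sub_one_eq_one {F : Type*} [Field F] {E : Subfield F} [Finite E]
    {a : F} (ha : a ∈ E) (ha0 : a ≠ 0) : a ^ (Nat.card E - 1) = 1 := by
  have := Fintype.ofFinite E
  rw [Nat.card_eq_fintype_card]
  simpa using congrArg Subtype.val
    (FiniteField.pow_card_sub_one_eq_one (⟨a, ha⟩ : E) fun h0 => ha0 (congrArg Subtype.val h0))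

theorem segre_transversal_general (q : ℕ) (hq3 : q % 3 ≠ 2)
    (F : Type*) [Field F] [Fintype F]
    (E₂ E₃ : Subfield F) (hE₂ : Nat.card E₂ = q ^ 2) (hE₃ : Nat.card E₃ = q ^ 3)
    (x x' y y' : F) (hx : x ∈ E₂) (hx' : x' ∈ E₂) (hy : y ∈ E₃) (hy' : y' ∈ E₃)
    (hx0 : x ≠ 0) (hx'0 : x' ≠ 0) (hy0 : y ≠ 0) (hy'0 : y' ≠ 0)
    (h : (x * y) ^ ((q ^ 2 - q + 1) * (q - 1)) = (x' * y') ^ ((q ^ 2 - q + 1) * (q - 1))) :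
    ∃ lam : F, lam ≠ 0 ∧ lam ^ q = lam ∧ x' * y' = lam * (x * y) := by
  have hq0 : q ≠ 0 := by
    rintro rfl
    exact Nat.card_pos.ne' (hE₂.trans (zero_pow two_ne_zero))
  have hxy0 : x * y ≠ 0 := mul_ne_zero hx0 hy0
  set lam := x' / x * (y' / y) with hlam
  have hlamN : lam ^ ((q ^ 2 - q + 1) * (q - 1)) = 1 := by
    rw [hlam, div_mul_div_comm, div_pow, ← h, div_self (pow_ne_zero _ hxy0)]
  have ha : (x' / x) ^ (q ^ 2 - 1) = 1 :=
    hE₂ ▸ Subfield.pow_card_sub_one_eq_one (E₂.div_mem hx' hx) (div_ne_zero hx'0 hx0)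
  have hb : (y' / y) ^ (q ^ 3 - 1) = 1 :=
    hE₃ ▸ Subfield.pow_card_sub_one_eq_one (E₃.div_mem hy' hy) (div_ne_zero hy'0 hy0)
  have hlamM : lam ^ ((q ^ 2 - 1) * (q ^ 3 - 1)) = 1 := by
    rw [mul_pow, pow_mul, ha, pow_mul', hb, one_pow, one_pow, one_mul]
  have hlam1 : lam ^ (q - 1) = 1 :=
    pow_eq_one_of_pow_mul_eq_one_of_coprime (Nat.coprime_sq_sub_add_one_mul hq3) hlamN hlamM
  refine ⟨lam, by positivity, ?_, by rw [hlam]; field_simp⟩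
  rw [← Nat.sub_one_add_one hq0, pow_succ, hlam1, one_mul]

theorem segre_transversal (q : ℕ) (hq : IsPrimePow q) (hq3 : q % 3 ≠ 2)
    (F : Type*) [Field F] [Fintype F] (hF : Fintype.card F = q ^ 6)
    (E₂ E₃ : Subfield F) (hE₂ : Nat.card E₂ = q ^ 2) (hE₃ : Nat.card E₃ = q ^ 3)
    (x x' y y' : F) (hx : x ∈ E₂) (hx' : x' ∈ E₂) (hy : y ∈ E₃) (hy' : y' ∈ E₃)
    (hx0 : x ≠ 0) (hx'0 : x' ≠ 0) (hy0 : y ≠ 0) (hy'0 : y' ≠ 0)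
    (h : (x * y) ^ ((q ^ 2 - q + 1) * (q - 1)) = (x' * y') ^ ((q ^ 2 - q + 1) * (q - 1))) :
    ∃ lam : F, lam ≠ 0 ∧ lam ^ q = lam ∧ x' * y' = lam * (x * y) :=
  segre_transversal_general q hq3 F E₂ E₃ hE₂ hE₃ x x' y y' hx hx' hy hy' hx0 hx'0 hy0 hy'0 h
end

section
/- Let q be a prime power, k ≥ 2, and suppose K is a two-intersection set with parameters (n, k, h_1, h_2) in PG(k−1, q): K is a set of n points such that every hyperplane contains exactly h_1 or exactly h_2 points of K. Then, as integers, n^2·(q^{k−2} − 1)/(q − 1) + n·((1 − h_1 − h_2)·(q^{k−1} − 1)/(q − 1) − (q^{k−2} − 1)/(q − 1)) + h_1·h_2·(q^k − 1)/(q − 1) = 0. -/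
/-!
Count hyperplanes through nonzero functionals `φ` (each hyperplane arises from `q - 1` of
them) and put `f φ = #(K ∩ ker φ)`. Every point lies in the kernel of `q ^ (d - 1) - 1`
and every pair of distinct points in the kernel of `q ^ (d - 2) - 1` nonzero functionals, so
double counting determines `∑ f` and `∑ f ^ 2` in terms of `n = #K`. Since `f` takes only the
values `h₁` and `h₂`, `∑ (f - h₁) (f - h₂) = 0`; this is the identity multiplied by `q - 1`.
-/

open Module Finset
open scoped LinearAlgebra.Projectivization

namespace Finset

variable {α β : Type*} (r : α → β → Prop) [∀ a b, Decidable (r a b)] {s : Finset α}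
  {t : Finset β}

theorem sum_card_filter_eq_card_mul {m : ℕ} (hm : ∀ b ∈ t, #{a ∈ s | r a b} = m) :
    ∑ a ∈ s, #{b ∈ t | r a b} = #t * m := by
  rw [← sum_const_nat hm]
  exact sum_card_bipartiteAbove_eq_sum_card_bipartiteBelow r

theorem sum_card_filter_sq_eq [DecidableEq β] {m l : ℕ} (hm : ∀ b ∈ t, #{a ∈ s | r a b} = m)
    (hl : ∀ b ∈ t, ∀ b' ∈ t, b ≠ b' → #{a ∈ s | r a b ∧ r a b'} = l) :
    ∑ a ∈ s, #{b ∈ t | r a b} ^ 2 = #t * m + #t.offDiag * l := by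
  have hsq : ∀ a ∈ s, #{b ∈ t | r a b} ^ 2 = #{p ∈ t ×ˢ t | r a p.1 ∧ r a p.2} := fun a _ => by
    rw [filter_product, card_product, sq]
  calc ∑ a ∈ s, #{b ∈ t | r a b} ^ 2
      = ∑ a ∈ s, #{p ∈ t ×ˢ t | r a p.1 ∧ r a p.2} := sum_congr rfl hsq
    _ = ∑ p ∈ t ×ˢ t, #{a ∈ s | r a p.1 ∧ r a p.2} :=
      sum_card_bipartiteAbove_eq_sum_card_bipartiteBelow _
    _ = #t * m + #t.offDiag * l := by
      rw [← diag_union_offDiag, sum_union (disjoint_diag_offDiag t), ← diag_card t]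
      congr 1
      · refine sum_const_nat fun p hp => ?_
        obtain ⟨hp, hdiag⟩ := mem_diag.1 hp
        simpa only [← hdiag, and_self] using hm _ hp
      · refine sum_const_nat fun p hp => ?_
        obtain ⟨hp₁, hp₂, hne⟩ := mem_offDiag.1 hp
        exact hl _ hp₁ _ hp₂ hne

theorem sum_sq_eq_of_forall_eq_or_eq {ι R : Type*} [CommRing R] {s : Finset ι} {f : ι → R}
    {a b : R} (h : ∀ i ∈ s, f i = a ∨ f i = b) :
    ∑ i ∈ s, f i ^ 2 = (a + b) * ∑ i ∈ s, f i - #s * (a * b) := by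
  rw [mul_sum, ← nsmul_eq_mul, ← sum_const, ← sum_sub_distrib]
  refine sum_congr rfl fun i hi => ?_
  rcases h i hi with h | h <;> rw [h] <;> ring

end Finset

section

variable {F V : Type*} [Field F] [AddCommGroup V] [Module F V]

theorem Subspace.natCard_dualAnnihilator [Fintype F] [FiniteDimensional F V]
    (W : Subspace F V) :
    Nat.card W.dualAnnihilator = Fintype.card F ^ (finrank F V - finrank F W) := by
  rw [Module.natCard_eq_pow_finrank (K := F), Nat.card_eq_fintype_card,
    ← Subspace.finrank_add_finrank_dualAnnihilator_eq W, Nat.add_sub_cancel_left]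

namespace Module.Dual

variable [Fintype F] [FiniteDimensional F V] [Fintype (Dual F V)]

open Classical in
theorem card_filter_ne_zero_forall_eq_zero (S : Set V) :
    #{φ : Dual F V | φ ≠ 0 ∧ ∀ x ∈ S, φ x = 0}
      = Fintype.card F ^ (finrank F V - finrank F (Submodule.span F S)) - 1 := by
  have hann (φ : Dual F V) :
      (∀ x ∈ S, φ x = 0) ↔ φ ∈ (Submodule.span F S).dualAnnihilator := by
    rw [← SetLike.mem_coe, Submodule.coe_dualAnnihilator_span]
    rfl
  calc #{φ : Dual F V | φ ≠ 0 ∧ ∀ x ∈ S, φ x = 0}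
      = #(({φ | ∀ x ∈ S, φ x = 0} : Finset (Dual F V)).erase 0) := by
        congr 1; ext φ; simp
    _ = #{φ : Dual F V | ∀ x ∈ S, φ x = 0} - 1 := card_erase_of_mem (by simp)
    _ = _ := by
      rw [← Subspace.natCard_dualAnnihilator, ← Nat.card_eq_finsetCard]
      exact congrArg (· - 1) (Nat.card_congr (Equiv.subtypeEquivRight (by simp [hann])))

open Classical in
theorem card_filter_ne_zero : #{φ : Dual F V | φ ≠ 0} = Fintype.card F ^ finrank F V - 1 := by
  have := card_filter_ne_zero_forall_eq_zero (F := F) (V := V) ∅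
  rw [Submodule.span_empty, finrank_bot, Nat.sub_zero] at this
  simpa using this

open Classical in
theorem card_filter_ne_zero_apply_rep_eq_zero (P : ℙ F V) :
    #{φ : Dual F V | φ ≠ 0 ∧ φ P.rep = 0} = Fintype.card F ^ (finrank F V - 1) - 1 := by
  simpa [finrank_span_singleton P.rep_nonzero] using
    card_filter_ne_zero_forall_eq_zero (F := F) (V := V) {P.rep}

open Classical in
theorem card_filter_ne_zero_apply_rep_eq_zero_of_ne {P Q : ℙ F V} (h : P ≠ Q) :
    #{φ : Dual F V | φ ≠ 0 ∧ φ P.rep = 0 ∧ φ Q.rep = 0}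
      = Fintype.card F ^ (finrank F V - 2) - 1 := by
  have hli : LinearIndependent F ![P.rep, Q.rep] := by
    rw [← Projectivization.independent_mk_iff_LinearIndependent P.rep_nonzero Q.rep_nonzero]
    simpa using h
  have := card_filter_ne_zero_forall_eq_zero (F := F) (V := V) (Set.range ![P.rep, Q.rep])
  rw [finrank_span_eq_card hli, Fintype.card_fin] at this
  convert this using 3 with φ
  simp [Matrix.range_cons, and_comm]

end Module.Dual

namespace Projectivization

def IsTwoIntersectionSet (K : Set (ℙ F V)) (h₁ h₂ : ℕ) : Prop :=
  ∀ φ : Dual F V, φ ≠ 0 →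
    {P ∈ K | φ P.rep = 0}.ncard = h₁ ∨ {P ∈ K | φ P.rep = 0}.ncard = h₂

theorem IsTwoIntersectionSet.quadratic_identity [Fintype F] [FiniteDimensional F V]
    {K : Set (ℙ F V)} {q d n h₁ h₂ : ℕ} (hq : Fintype.card F = q) (hd : finrank F V = d)
    (hn : K.ncard = n) (hK : IsTwoIntersectionSet K h₁ h₂) :
    (n : ℚ) * (q ^ (d - 1) - 1) + n * (n - 1) * (q ^ (d - 2) - 1)
      - (h₁ + h₂) * n * (q ^ (d - 1) - 1) + h₁ * h₂ * (q ^ d - 1) = 0 := by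
  classical
  subst hq hd hn
  have : Finite V := Module.finite_of_finite F
  have : Finite (Dual F V) := Module.finite_of_finite F
  have : Fintype (Dual F V) := Fintype.ofFinite _
  obtain ⟨K, rfl⟩ : ∃ s : Finset (ℙ F V), ↑s = K := ⟨K.toFinite.toFinset, by simp⟩
  let D : Finset (Dual F V) := {φ | φ ≠ 0}
  have hfirst : ∑ φ ∈ D, #{P ∈ K | φ P.rep = 0}
      = #K * (Fintype.card F ^ (finrank F V - 1) - 1) :=
    sum_card_filter_eq_card_mul _ fun P _ => by
      rw [filter_filter]; exact Dual.card_filter_ne_zero_apply_rep_eq_zero P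
  have hsecond : ∑ φ ∈ D, #{P ∈ K | φ P.rep = 0} ^ 2
      = #K * (Fintype.card F ^ (finrank F V - 1) - 1)
        + #K.offDiag * (Fintype.card F ^ (finrank F V - 2) - 1) :=
    sum_card_filter_sq_eq _
      (fun P _ => by rw [filter_filter]; exact Dual.card_filter_ne_zero_apply_rep_eq_zero P)
      fun P _ Q _ hPQ => by
        rw [filter_filter]; exact Dual.card_filter_ne_zero_apply_rep_eq_zero_of_ne hPQ
  have htwo := sum_sq_eq_of_forall_eq_or_eq (s := D)
    (f := fun φ => (#{P ∈ K | φ P.rep = 0} : ℚ)) (a := h₁) (b := h₂) fun φ hφ => by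
      rw [← Set.ncard_coe_finset, coe_filter]
      exact_mod_cast hK φ (mem_filter.1 hφ).2
  have hD : #D = Fintype.card F ^ finrank F V - 1 := Dual.card_filter_ne_zero
  have hcast (m : ℕ) :
      ((Fintype.card F ^ m - 1 : ℕ) : ℚ) = (Fintype.card F : ℚ) ^ m - 1 := by
    rw [Nat.cast_sub (Nat.one_le_pow _ _ Fintype.card_pos)]
    push_cast
    rfl
  have hoff : (#K.offDiag : ℚ) = #K * (#K - 1) := by
    rw [offDiag_card, Nat.cast_sub (Nat.le_mul_self _)]
    push_cast
    ring
  simp only [← Nat.cast_sum, ← Nat.cast_pow, hfirst, hsecond, hD] at htwo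
  push_cast [hcast, hoff] at htwo
  rw [Set.ncard_coe_finset]
  linear_combination htwo

end Projectivization

end

theorem two_intersection_set_quadratic_identity_general
    (q : ℕ) (F : Type*) [Field F] [Fintype F] (hq : Fintype.card F = q)
    (k n h₁ h₂ : ℕ)
    (K : Set (Projectivization F (Fin k → F))) (hn : K.ncard = n)
    (hint : ∀ φ : (Fin k → F) →ₗ[F] F, φ ≠ 0 →
      {P ∈ K | φ P.rep = 0}.ncard = h₁ ∨ {P ∈ K | φ P.rep = 0}.ncard = h₂) :
    (n : ℚ) ^ 2 * (((q : ℚ) ^ (k - 2) - 1) / ((q : ℚ) - 1)) +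
      (n : ℚ) * ((1 - (h₁ : ℚ) - (h₂ : ℚ)) * (((q : ℚ) ^ (k - 1) - 1) / ((q : ℚ) - 1)) -
        ((q : ℚ) ^ (k - 2) - 1) / ((q : ℚ) - 1)) +
      (h₁ : ℚ) * (h₂ : ℚ) * (((q : ℚ) ^ k - 1) / ((q : ℚ) - 1)) = 0 := by
  have key := Projectivization.IsTwoIntersectionSet.quadratic_identity hq
    (Module.finrank_fin_fun F) hn hint
  have hq1 : (q : ℚ) - 1 ≠ 0 := by
    rw [sub_ne_zero, Nat.cast_ne_one, ← hq]
    exact Fintype.one_lt_card.ne'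
  field_simp
  linear_combination key

theorem two_intersection_set_quadratic_identity
    (q : ℕ) (F : Type*) [Field F] [Fintype F] (hq : Fintype.card F = q)
    (k n h₁ h₂ : ℕ) (hk : 2 ≤ k)
    (K : Set (Projectivization F (Fin k → F))) (hn : K.ncard = n)
    (hint : ∀ φ : (Fin k → F) →ₗ[F] F, φ ≠ 0 →
      {P ∈ K | φ P.rep = 0}.ncard = h₁ ∨ {P ∈ K | φ P.rep = 0}.ncard = h₂) :
    (n : ℚ) ^ 2 * (((q : ℚ) ^ (k - 2) - 1) / ((q : ℚ) - 1)) +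
      (n : ℚ) * ((1 - (h₁ : ℚ) - (h₂ : ℚ)) * (((q : ℚ) ^ (k - 1) - 1) / ((q : ℚ) - 1)) -
        ((q : ℚ) ^ (k - 2) - 1) / ((q : ℚ) - 1)) +
      (h₁ : ℚ) * (h₂ : ℚ) * (((q : ℚ) ^ k - 1) / ((q : ℚ) - 1)) = 0 :=
  two_intersection_set_quadratic_identity_general q F hq k n h₁ h₂ K hn hint
end

section
/- Let q be a prime power, k ≥ 2, and suppose K is a two-intersection set with parameters (n, k, h_1, h_2) in PG(k−1, q) with h_1 < h_2, such that K is nonempty and K is not the set of all points of PG(k−1, q). Then h_2 − h_1 divides q^{k−2}. -/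
/-!
Fix `P ∈ K` and `Q ∉ K` and compare the two sets of functionals
`A = {φ | φ P = 0, φ Q = 1}` and `B = {φ | φ P = 1, φ Q = 0}`. Both are fibres of the
surjective evaluation `φ ↦ (φ P, φ Q)`, so `|A| = |B| = q ^ (k - 2)`. Double counting the
incidences between `K` and the hyperplanes `ker φ`: `P` lies on every hyperplane from `A` and on
none from `B`, while any other `R ∈ K` lies on as many from `A` as from `B`, because the
conditions `φ R = 0` cut out fibres of `φ ↦ (φ P, φ Q, φ R)` which are empty or not at the same
time by the Steinitz exchange lemma. Hence `Σ_A |K ∩ ker φ| - Σ_B |K ∩ ker φ| = q ^ (k - 2)`,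
while every summand is `h₁` or `h₂`, so both sums are congruent to `q ^ (k - 2) * h₁` modulo
`h₂ - h₁`.
-/

open Module Finset
open scoped LinearAlgebra.Projectivization

theorem Projectivization.rep_notMem_span_rep {F V : Type*} [DivisionRing F] [AddCommGroup V]
    [Module F V] {P Q : ℙ F V} (h : P ≠ Q) : P.rep ∉ F ∙ Q.rep := by
  rw [Submodule.mem_span_singleton]
  rintro ⟨a, ha⟩
  apply h
  rw [← P.mk_rep, ← Q.mk_rep, mk_eq_mk_iff' F _ _ P.rep_nonzero Q.rep_nonzero]
  exact ⟨a, ha⟩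

theorem Submodule.mem_span_insert_comm {F V : Type*} [DivisionRing F] [AddCommGroup V]
    [Module F V] {x y : V} {s : Set V} (hx : x ∉ span F s) (hy : y ∉ span F s) :
    x ∈ span F (insert y s) ↔ y ∈ span F (insert x s) :=
  ⟨fun h => mem_span_insert_exchange h hx, fun h => mem_span_insert_exchange h hy⟩

theorem Submodule.exists_dual_apply_eq_one_and_le_ker_iff {F V : Type*} [Field F]
    [AddCommGroup V] [Module F V] {p : Submodule F V} {x : V} :
    (∃ φ : Dual F V, φ x = 1 ∧ p ≤ LinearMap.ker φ) ↔ x ∉ p := by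
  refine ⟨fun ⟨φ, hx, hp⟩ hxp => one_ne_zero (hx ▸ LinearMap.mem_ker.mp (hp hxp)), fun hx => ?_⟩
  obtain ⟨φ, hφx, hp⟩ := p.exists_le_ker_of_notMem hx
  refine ⟨(φ x)⁻¹ • φ, inv_mul_cancel₀ hφx, fun y hy => ?_⟩
  simp [LinearMap.mem_ker.mp (hp hy)]

theorem AddMonoidHom.card_fiber_eq_of_mem_range_iff {G M Fn : Type*} [AddGroup G] [Fintype G]
    [AddMonoid M] [DecidableEq M] [FunLike Fn G M] [AddMonoidHomClass Fn G M] (f : Fn) {x y : M}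
    (h : x ∈ Set.range f ↔ y ∈ Set.range f) : #{g | f g = x} = #{g | f g = y} := by
  by_cases hx : x ∈ Set.range f
  · exact card_fiber_eq_of_mem_range f hx (h.mp hx)
  · have hy : y ∉ Set.range f := mt h.mpr hx
    simp only [Set.mem_range, not_exists] at hx hy
    simp [hx, hy]

theorem Finset.sub_dvd_sum_sub_sum_of_forall_eq_or_eq {ι R : Type*} [CommRing R]
    {s t : Finset ι} {f : ι → R} {a b : R} (hs : ∀ i ∈ s, f i = a ∨ f i = b)
    (ht : ∀ i ∈ t, f i = a ∨ f i = b) (hst : #s = #t) :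
    b - a ∣ ∑ i ∈ s, f i - ∑ i ∈ t, f i := by
  have key (u : Finset ι) (hu : ∀ i ∈ u, f i = a ∨ f i = b) :
      b - a ∣ ∑ i ∈ u, f i - #u • a := by
    rw [← sum_const, ← sum_sub_distrib]
    refine dvd_sum fun i hi => ?_
    rcases hu i hi with h | h <;> simp [h]
  simpa [hst] using dvd_sub (key s hs) (key t ht)

namespace Module.Dual

section CommSemiring

variable (R : Type*) {M ι : Type*} [CommSemiring R] [AddCommMonoid M] [Module R M]

def evalAt (v : ι → M) : Dual R M →ₗ[R] ι → R :=
  LinearMap.pi fun i => Dual.eval R M (v i)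

variable {R}

@[simp]
theorem evalAt_apply (v : ι → M) (φ : Dual R M) (i : ι) : evalAt R v φ i = φ (v i) := rfl

end CommSemiring

variable {F V ι : Type*} [Field F] [AddCommGroup V] [Module F V]

theorem evalAt_surjective {v : ι → V} (hv : LinearIndependent F v) :
    Function.Surjective (evalAt F v) := by
  intro c
  obtain ⟨φ, hφ⟩ := LinearMap.exists_extend ((Basis.span hv).constr F c)
  refine ⟨φ, funext fun i => ?_⟩
  have := congr($hφ (Basis.span hv i))
  rw [LinearMap.comp_apply, Basis.constr_basis] at this
  simpa [Basis.span_apply] using this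

theorem card_filter_evalAt_eq [Fintype F] [DecidableEq F] [FiniteDimensional F V]
    [Fintype (Dual F V)] [Fintype ι] {v : ι → V} (hv : LinearIndependent F v) (c : ι → F) :
    #{φ | evalAt F v φ = c} = Fintype.card F ^ (finrank F V - Fintype.card ι) := by
  set e := evalAt F v
  have hsurj := evalAt_surjective hv
  have hker : #{φ | e φ = 0} = Nat.card (LinearMap.ker e) := by
    classical
    rw [Nat.card_eq_fintype_card, Fintype.card_subtype]
    simp
  have hrank : finrank F (LinearMap.ker e) = finrank F V - Fintype.card ι := by
    have := e.finrank_range_add_finrank_ker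
    rw [LinearMap.range_eq_top.mpr hsurj, finrank_top, finrank_fintype_fun_eq_card,
      Subspace.dual_finrank_eq] at this
    omega
  rw [AddMonoidHom.card_fiber_eq_of_mem_range e (hsurj c) ⟨0, map_zero e⟩, hker,
    natCard_eq_pow_finrank (K := F), hrank, Nat.card_eq_fintype_card]

theorem exists_apply_eq_zero_one_zero_iff {x y u : V} :
    (∃ φ : Dual F V, φ x = 0 ∧ φ y = 1 ∧ φ u = 0) ↔ y ∉ Submodule.span F {x, u} := by
  simp only [← Submodule.exists_dual_apply_eq_one_and_le_ker_iff, Submodule.span_le,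
    Set.insert_subset_iff, Set.singleton_subset_iff, SetLike.mem_coe, LinearMap.mem_ker]
  tauto

theorem card_filter_apply_eq_zero_one_zero_eq_one_zero_zero [Fintype (Dual F V)]
    [DecidableEq F] {v w u : V} (hv : v ∉ F ∙ u) (hw : w ∉ F ∙ u) :
    #{φ : Dual F V | φ v = 0 ∧ φ w = 1 ∧ φ u = 0} =
      #{φ : Dual F V | φ v = 1 ∧ φ w = 0 ∧ φ u = 0} := by
  have hfiber (φ : Dual F V) (a b : F) :
      evalAt F ![v, w, u] φ = ![a, b, 0] ↔ φ v = a ∧ φ w = b ∧ φ u = 0 := by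
    simp [funext_iff, Fin.forall_fin_succ]
  simp_rw [← hfiber]
  apply AddMonoidHom.card_fiber_eq_of_mem_range_iff
  simp_rw [Set.mem_range, hfiber, exists_apply_eq_zero_one_zero_iff,
    (Submodule.mem_span_insert_comm hw hv).not, ← exists_apply_eq_zero_one_zero_iff]
  exact exists_congr fun _ => and_left_comm

end Module.Dual

theorem Projectivization.sum_card_filter_rep_eq_zero_eq_card_add_sum {F V : Type*} [Field F]
    [AddCommGroup V] [Module F V] [Fintype (Dual F V)] [DecidableEq F] {K : Finset (ℙ F V)}
    {P Q : ℙ F V} (hP : P ∈ K) (hQ : Q ∉ K) :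
    ∑ φ : Dual F V with φ P.rep = 0 ∧ φ Q.rep = 1, #{R ∈ K | φ R.rep = 0} =
      #{φ : Dual F V | φ P.rep = 0 ∧ φ Q.rep = 1} +
        ∑ φ : Dual F V with φ P.rep = 1 ∧ φ Q.rep = 0, #{R ∈ K | φ R.rep = 0} := by
  classical
  set A : Finset (Dual F V) := {φ | φ P.rep = 0 ∧ φ Q.rep = 1}
  set B : Finset (Dual F V) := {φ | φ P.rep = 1 ∧ φ Q.rep = 0}
  have hdouble (S : Finset (Dual F V)) :
      ∑ φ ∈ S, #{R ∈ K | φ R.rep = 0} = ∑ R ∈ K, #{φ ∈ S | φ R.rep = 0} :=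
    sum_card_bipartiteAbove_eq_sum_card_bipartiteBelow _
  have hPA : #{φ ∈ A | φ P.rep = 0} = #A := by
    rw [filter_true_of_mem fun φ hφ => (mem_filter.mp hφ).2.1]
  have hPB : #{φ ∈ B | φ P.rep = 0} = 0 :=
    card_eq_zero.mpr (filter_false_of_mem fun φ hφ h => by simp [B, h] at hφ)
  have hrest : ∀ R ∈ K.erase P, #{φ ∈ A | φ R.rep = 0} = #{φ ∈ B | φ R.rep = 0} := by
    intro R hR
    obtain ⟨hRP, hRK⟩ := mem_erase.mp hR
    simp only [A, B, filter_filter, and_assoc]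
    exact Dual.card_filter_apply_eq_zero_one_zero_eq_one_zero_zero
      (rep_notMem_span_rep hRP.symm) (rep_notMem_span_rep (ne_of_mem_of_not_mem hRK hQ).symm)
  rw [hdouble, hdouble, ← add_sum_erase K _ hP, ← add_sum_erase K _ hP, sum_congr rfl hrest,
    hPA, hPB, zero_add]

theorem two_intersection_set_divisibility_general
    (q : ℕ) (F : Type*) [Field F] [Fintype F] (hq : Fintype.card F = q)
    (k h₁ h₂ : ℕ) (hh : h₁ < h₂)
    (K : Set (Projectivization F (Fin k → F)))
    (hK_ne : K.Nonempty) (hK_ne_univ : K ≠ Set.univ)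
    (hint : ∀ φ : (Fin k → F) →ₗ[F] F, φ ≠ 0 →
      {P ∈ K | φ P.rep = 0}.ncard = h₁ ∨ {P ∈ K | φ P.rep = 0}.ncard = h₂) :
    (h₂ - h₁) ∣ q ^ (k - 2) := by
  classical
  have : Finite (Dual F (Fin k → F)) := Module.finite_of_finite F
  let _ := Fintype.ofFinite (Dual F (Fin k → F))
  obtain ⟨K, rfl⟩ := K.toFinite.exists_finset_coe
  obtain ⟨P, hP⟩ := hK_ne
  obtain ⟨Q, hQ⟩ := (Set.ne_univ_iff_exists_notMem _).mp hK_ne_univ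
  have hPQ : LinearIndependent F ![P.rep, Q.rep] :=
    Projectivization.linearIndependent_pair_iff_ne.mpr (ne_of_mem_of_not_mem hP hQ)
  have hcard (a b : F) :
      #{φ : Dual F (Fin k → F) | φ P.rep = a ∧ φ Q.rep = b} = q ^ (k - 2) := by
    simpa [funext_iff, Fin.forall_fin_two, hq] using Dual.card_filter_evalAt_eq hPQ ![a, b]
  have hval (φ : Dual F (Fin k → F)) (hφ : φ ≠ 0) :
      (#{R ∈ K | φ R.rep = 0} : ℤ) = h₁ ∨ (#{R ∈ K | φ R.rep = 0} : ℤ) = h₂ := by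
    simpa [← Finset.coe_filter, Set.ncard_coe_finset] using hint φ hφ
  have hdvd := Finset.sub_dvd_sum_sub_sum_of_forall_eq_or_eq
    (s := {φ | φ P.rep = 0 ∧ φ Q.rep = 1}) (t := {φ | φ P.rep = 1 ∧ φ Q.rep = 0})
    (fun φ hφ => hval φ fun h => by simp [h] at hφ)
    (fun φ hφ => hval φ fun h => by simp [h] at hφ) (by rw [hcard, hcard])
  rw [← Nat.cast_sum, ← Nat.cast_sum,
    Projectivization.sum_card_filter_rep_eq_zero_eq_card_add_sum hP hQ, hcard, Nat.cast_add,
    add_sub_cancel_right, ← Nat.cast_sub hh.le] at hdvd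
  exact_mod_cast hdvd

theorem two_intersection_set_divisibility
    (q : ℕ) (F : Type*) [Field F] [Fintype F] (hq : Fintype.card F = q)
    (k n h₁ h₂ : ℕ) (hk : 2 ≤ k) (hh : h₁ < h₂)
    (K : Set (Projectivization F (Fin k → F))) (hn : K.ncard = n)
    (hK_ne : K.Nonempty) (hK_ne_univ : K ≠ Set.univ)
    (hint : ∀ φ : (Fin k → F) →ₗ[F] F, φ ≠ 0 →
      {P ∈ K | φ P.rep = 0}.ncard = h₁ ∨ {P ∈ K | φ P.rep = 0}.ncard = h₂) :
    (h₂ - h₁) ∣ q ^ (k - 2) :=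
  two_intersection_set_divisibility_general q F hq k h₁ h₂ hh K hK_ne hK_ne_univ hint
end
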